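/- Let α < 0 and a > 0. The eigenvalue equation for the Schrödinger operator H_α = −d²/dx² + α·δ_{−a} + α·δ_{+a} on ℝ has exactly two negative eigenvalues if and only if a > −1/α; they are E₁ = −(1/(4a²))[W(−aα e^{aα}) − aα]² and E₂ = −(1/(4a²))[W(aα e^{aα}) − aα]², where W is the principal branch of the Lambert W function, and E₁ < E₂ < 0. -/

import Mathlib

/-!
For `E = -β² < 0` an `L²` eigenfunction is `L e^{βx}` on `x < -a`, `D₁ e^{βx} + D₂ e^{-βx}` on
`(-a, a)` and `R e^{-βx}` on `x > a`. The matching conditions at `±a` form the symmetric system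
`x D₁ + y D₂ = 0`, `y D₁ + x D₂ = 0` with `x = (2β + α) e^{βa}` and `y = α e^{-βa}`, so `x = ∓y`
(even and odd states). For `u = a (2β + α)` this reads `u eᵘ = ∓ aα e^{aα}`, and since `u > aα`
the solution is the principal branch `u = W(∓ aα e^{aα})`. The odd state exists iff this branch
differs from the trivial solution `u = aα`, i.e. iff `aα < -1`.
-/

/-- `E` is an eigenvalue of the Schrödinger operator `−d²/dx² + α δ_{−a} + α δ_{+a}`:
there is a nonzero continuous `L²` eigenfunction, twice differentiable away from
`±a`, satisfying `−ψ″ = Eψ` off `±a` together with the jump conditions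
`ψ′(±a+0) − ψ′(±a−0) = α ψ(±a)`. -/
def IsDeltaEigen (α a E : ℝ) : Prop :=
  ∃ ψ : ℝ → ℝ, ψ ≠ 0 ∧ Continuous ψ ∧
    MeasureTheory.MemLp ψ 2 MeasureTheory.volume ∧
    (∀ x : ℝ, x ≠ a → x ≠ -a →
      DifferentiableAt ℝ ψ x ∧ DifferentiableAt ℝ (deriv ψ) x ∧
      -deriv (deriv ψ) x = E * ψ x) ∧
    (∃ dp dm : ℝ,
      Filter.Tendsto (deriv ψ) (nhdsWithin a (Set.Ioi a)) (nhds dp) ∧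
      Filter.Tendsto (deriv ψ) (nhdsWithin a (Set.Iio a)) (nhds dm) ∧
      dp - dm = α * ψ a) ∧
    (∃ dp dm : ℝ,
      Filter.Tendsto (deriv ψ) (nhdsWithin (-a) (Set.Ioi (-a))) (nhds dp) ∧
      Filter.Tendsto (deriv ψ) (nhdsWithin (-a) (Set.Iio (-a))) (nhds dm) ∧
      dp - dm = α * ψ (-a))

open Real Filter Set MeasureTheory Topology

lemma hasDerivAt_exp_mul (c x : ℝ) : HasDerivAt (fun y ↦ exp (c * y)) (c * exp (c * x)) x :=
  ((hasDerivAt_id x).const_mul c).exp.congr_deriv (by simp only [id, mul_one]; ring)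

lemma hasDerivAt_mul_exp (x : ℝ) :
    HasDerivAt (fun w ↦ w * exp w) ((x + 1) * exp x) x :=
  ((hasDerivAt_id x).mul (hasDerivAt_exp x)).congr_deriv (by simp only [id]; ring)

lemma strictMonoOn_mul_exp : StrictMonoOn (fun w ↦ w * exp w) (Ici (-1)) :=
  strictMonoOn_of_deriv_pos (convex_Ici _) (by fun_prop) fun x hx ↦ by
    rw [interior_Ici, mem_Ioi] at hx
    rw [(hasDerivAt_mul_exp x).deriv]
    exact mul_pos (by linarith) (exp_pos x)

lemma strictAntiOn_mul_exp : StrictAntiOn (fun w ↦ w * exp w) (Iic (-1)) :=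
  strictAntiOn_of_deriv_neg (convex_Iic _) (by fun_prop) fun x hx ↦ by
    rw [interior_Iic, mem_Iio] at hx
    rw [(hasDerivAt_mul_exp x).deriv]
    exact mul_neg_of_neg_of_pos (by linarith) (exp_pos x)

lemma neg_exp_neg_one_le_mul_exp (w : ℝ) : -exp (-1) ≤ w * exp w := by
  rw [← neg_one_mul]
  rcases le_total (-1) w with h | h
  · exact strictMonoOn_mul_exp.monotoneOn self_mem_Ici h h
  · exact strictAntiOn_mul_exp.antitoneOn h self_mem_Iic h

lemma mul_exp_eq_mul_exp_iff {u v w : ℝ} (hw : -1 ≤ w) (hvu : v < u)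
    (hvw : v * exp v ≤ w * exp w) : u * exp u = w * exp w ↔ u = w := by
  refine ⟨fun h ↦ strictMonoOn_mul_exp.injOn ?_ hw h, fun h ↦ h ▸ rfl⟩
  -- for `u < -1` both `v < u` lie on the decreasing branch, so `u eᵘ < v eᵛ ≤ w e^w`
  by_contra! hu
  rw [mem_Ici, not_le] at hu
  have := strictAntiOn_mul_exp (mem_Iic.2 (hvu.trans hu).le) (mem_Iic.2 hu.le) hvu
  linarith

noncomputable def expSum (β A B x : ℝ) : ℝ := A * exp (β * x) + B * exp (-(β * x))

section ExpSum

variable {β A B : ℝ}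

lemma expSum_neg (β A B x : ℝ) : expSum β A B (-x) = expSum β B A x := by
  simp only [expSum, mul_neg, neg_neg]
  ring

lemma continuous_expSum (β A B : ℝ) : Continuous (expSum β A B) := by
  unfold expSum
  fun_prop

lemma hasDerivAt_expSum (β A B x : ℝ) :
    HasDerivAt (expSum β A B) (expSum β (β * A) (-(β * B)) x) x := by
  have h := (hasDerivAt_exp_mul β x).const_mul A
  have h' := (hasDerivAt_exp_mul (-β) x).const_mul B
  simp only [neg_mul] at h'
  exact (h.add h').congr_deriv (by simp only [expSum]; ring)

lemma deriv_expSum (β A B : ℝ) : deriv (expSum β A B) = expSum β (β * A) (-(β * B)) :=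
  funext fun x ↦ (hasDerivAt_expSum β A B x).deriv

lemma exists_eqOn_mul_exp {s : Set ℝ} (hs : IsOpen s) (hs' : IsPreconnected s) {u : ℝ → ℝ}
    {c : ℝ} (hu : ∀ x ∈ s, HasDerivAt u (c * u x) x) :
    ∃ C, EqOn u (fun x ↦ C * exp (c * x)) s := by
  have hg : ∀ x ∈ s, HasDerivAt (fun x ↦ u x * exp (-c * x)) 0 x := fun x hx ↦
    ((hu x hx).mul (hasDerivAt_exp_mul (-c) x)).congr_deriv (by ring)
  obtain ⟨C, hC⟩ := hs.exists_is_const_of_deriv_eq_zero hs'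
    (fun x hx ↦ (hg x hx).differentiableAt.differentiableWithinAt) fun x hx ↦ (hg x hx).deriv
  refine ⟨C, fun x hx ↦ ?_⟩
  show u x = C * exp (c * x)
  rw [← hC x hx, mul_assoc, ← exp_add, neg_mul, neg_add_cancel, exp_zero, mul_one]

/-- `f' + β f` and `f' - β f` solve `u' = β u` and `u' = -β u`. -/
lemma exists_eqOn_expSum {s : Set ℝ} (hs : IsOpen s) (hs' : IsPreconnected s) (hβ : β ≠ 0)
    {f : ℝ → ℝ} (hf : ∀ x ∈ s, DifferentiableAt ℝ f x ∧ DifferentiableAt ℝ (deriv f) x ∧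
      deriv (deriv f) x = β ^ 2 * f x) :
    ∃ A B, EqOn f (expSum β A B) s := by
  have hf' : ∀ x ∈ s, HasDerivAt f (deriv f x) x := fun x hx ↦ (hf x hx).1.hasDerivAt
  have hf'' : ∀ x ∈ s, HasDerivAt (deriv f) (β ^ 2 * f x) x := fun x hx ↦
    (hf x hx).2.2 ▸ (hf x hx).2.1.hasDerivAt
  obtain ⟨C, hC⟩ := exists_eqOn_mul_exp (u := fun x ↦ deriv f x + β * f x) (c := β) hs hs'
    fun x hx ↦ ((hf'' x hx).add ((hf' x hx).const_mul β)).congr_deriv (by ring)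
  obtain ⟨D, hD⟩ := exists_eqOn_mul_exp (u := fun x ↦ deriv f x - β * f x) (c := -β) hs hs'
    fun x hx ↦ ((hf'' x hx).sub ((hf' x hx).const_mul β)).congr_deriv (by ring)
  refine ⟨C / (2 * β), -D / (2 * β), fun x hx ↦ ?_⟩
  have hCx := hC hx
  have hDx := hD hx
  simp only [neg_mul] at hCx hDx
  simp only [expSum]
  field_simp
  linear_combination hCx - hDx

lemma Filter.EventuallyEq.deriv_deriv_eq_of_expSum {ψ : ℝ → ℝ} {x : ℝ}
    (h : ψ =ᶠ[𝓝 x] expSum β A B) :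
    DifferentiableAt ℝ ψ x ∧ DifferentiableAt ℝ (deriv ψ) x ∧
      deriv (deriv ψ) x = β ^ 2 * ψ x := by
  have h' : deriv ψ =ᶠ[𝓝 x] expSum β (β * A) (-(β * B)) := deriv_expSum β A B ▸ h.deriv
  refine ⟨h.differentiableAt_iff.2 (hasDerivAt_expSum β A B x).differentiableAt,
    h'.differentiableAt_iff.2 (hasDerivAt_expSum _ _ _ x).differentiableAt, ?_⟩
  rw [h'.deriv_eq, deriv_expSum, h.eq_of_nhds]
  simp only [expSum]
  ring

variable {ψ : ℝ → ℝ} {s : Set ℝ} {x₀ : ℝ}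

lemma eq_expSum_of_eventuallyEq [(𝓝[s] x₀).NeBot] (hψ : ContinuousAt ψ x₀)
    (h : ψ =ᶠ[𝓝[s] x₀] expSum β A B) : ψ x₀ = expSum β A B x₀ :=
  tendsto_nhds_unique (hψ.tendsto.mono_left nhdsWithin_le_nhds)
    ((((continuous_expSum β A B).tendsto x₀).mono_left nhdsWithin_le_nhds).congr' h.symm)

lemma tendsto_deriv_of_eventuallyEq_expSum (hs : IsOpen s) (h : ψ =ᶠ[𝓝[s] x₀] expSum β A B) :
    Tendsto (deriv ψ) (𝓝[s] x₀) (𝓝 (expSum β (β * A) (-(β * B)) x₀)) := by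
  have hderiv : expSum β (β * A) (-(β * B)) =ᶠ[𝓝[s] x₀] deriv ψ := by
    filter_upwards [eventually_eventually_nhdsWithin.2 h, self_mem_nhdsWithin] with y hy hys
    rw [hs.nhdsWithin_eq hys] at hy
    have hy' : ψ =ᶠ[𝓝 y] expSum β A B := hy
    rw [hy'.deriv_eq, deriv_expSum]
  exact (((continuous_expSum _ _ _).tendsto x₀).mono_left nhdsWithin_le_nhds).congr' hderiv

lemma exists_jump_iff {α C D : ℝ} (hl : ψ =ᶠ[𝓝[<] x₀] expSum β A B)
    (hr : ψ =ᶠ[𝓝[>] x₀] expSum β C D) :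
    (∃ dp dm : ℝ, Tendsto (deriv ψ) (𝓝[>] x₀) (𝓝 dp) ∧ Tendsto (deriv ψ) (𝓝[<] x₀) (𝓝 dm) ∧
      dp - dm = α * ψ x₀) ↔
    expSum β (β * C) (-(β * D)) x₀ - expSum β (β * A) (-(β * B)) x₀ = α * ψ x₀ := by
  have hr' := tendsto_deriv_of_eventuallyEq_expSum isOpen_Ioi hr
  have hl' := tendsto_deriv_of_eventuallyEq_expSum isOpen_Iio hl
  refine ⟨fun ⟨dp, dm, hp, hm, h⟩ ↦ ?_, fun h ↦ ⟨_, _, hr', hl', h⟩⟩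
  rwa [tendsto_nhds_unique hp hr', tendsto_nhds_unique hm hl'] at h

end ExpSum

lemma MeasureTheory.MemLp.not_tendsto_norm_atTop {E : Type*} [NormedAddCommGroup E]
    {p : ENNReal} (hp : p ≠ 0) (hp' : p ≠ ⊤) {f : ℝ → E} (hf : MemLp f p volume) :
    ¬Tendsto (fun x ↦ ‖f x‖) atTop atTop := by
  intro h
  obtain ⟨M, hM⟩ := eventually_atTop.1 (h.eventually_ge_atTop 1)
  refine (hf.meas_ge_lt_top hp hp' one_ne_zero).ne
    (measure_mono_top (fun x hx ↦ ?_) (Real.volume_Ici (a := M)))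
  simpa [← NNReal.coe_le_coe] using hM x hx

section Decay

variable {β A B : ℝ} {ψ : ℝ → ℝ}

lemma eq_zero_of_memLp_of_eqOn_Ioi (hβ : 0 < β) (hψ : MemLp ψ 2 volume) {a : ℝ}
    (h : EqOn ψ (expSum β A B) (Ioi a)) : A = 0 := by
  by_contra hA
  refine hψ.not_tendsto_norm_atTop two_ne_zero ENNReal.ofNat_ne_top ?_
  have hβx : Tendsto (fun x ↦ β * x) atTop atTop := tendsto_id.const_mul_atTop hβ
  have hlim : Tendsto (fun x ↦ |A + B * exp (-(β * x)) ^ 2|) atTop (𝓝 |A|) := by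
    have hdecay := tendsto_exp_neg_atTop_nhds_zero.comp hβx
    simpa using (((hdecay.pow 2).const_mul B).const_add A).abs
  refine (hlim.pos_mul_atTop (abs_pos.2 hA) (tendsto_exp_atTop.comp hβx)).congr' ?_
  filter_upwards [Ioi_mem_atTop a] with x hx
  have hinv : exp (-(β * x)) * exp (β * x) = 1 := by rw [← exp_add, neg_add_cancel, exp_zero]
  rw [Function.comp_apply, Real.norm_eq_abs, h hx, ← abs_of_pos (exp_pos (β * x)), ← abs_mul,
    expSum]
  congr 1
  linear_combination B * exp (-(β * x)) * hinv

lemma eq_zero_of_memLp_of_eqOn_Iio (hβ : 0 < β) (hψ : MemLp ψ 2 volume) {a : ℝ}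
    (h : EqOn ψ (expSum β A B) (Iio a)) : B = 0 :=
  eq_zero_of_memLp_of_eqOn_Ioi (ψ := ψ ∘ Neg.neg) (a := -a) hβ
    (hψ.comp_measurePreserving (Measure.measurePreserving_neg volume)) fun x hx ↦ by
      rw [Function.comp_apply, h (mem_Iio.2 (neg_lt.1 hx)), expSum_neg]

lemma memLp_two_of_eqOn_expSum (hβ : 0 < β) (hψ : Continuous ψ) {a b : ℝ}
    (hl : EqOn ψ (expSum β A 0) (Iio a)) (hr : EqOn ψ (expSum β 0 B) (Ioi b)) :
    MemLp ψ 2 volume := by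
  rw [memLp_two_iff_integrable_sq hψ.aestronglyMeasurable, ← integrableOn_univ]
  have hcover : Iio a ∪ Icc a b ∪ Ioi b = univ := eq_univ_of_forall fun x ↦ by
    simp only [mem_union, mem_Iio, mem_Icc, mem_Ioi]
    grind
  rw [← hcover]
  refine ((IntegrableOn.union ?_ ((hψ.pow 2).integrableOn_Icc)).union ?_)
  · have hexp := (integrableOn_exp_mul_Iic (by linarith : 0 < 2 * β) a).mono_set
      Iio_subset_Iic_self
    refine IntegrableOn.congr_fun (hexp.const_mul (A ^ 2)) (fun x hx ↦ ?_) measurableSet_Iio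
    rw [Pi.pow_apply, hl hx, expSum, show 2 * β * x = β * x + β * x by ring, exp_add]
    ring
  · have hexp := integrableOn_exp_mul_Ioi (by linarith : -2 * β < 0) b
    refine IntegrableOn.congr_fun (hexp.const_mul (B ^ 2)) (fun x hx ↦ ?_) measurableSet_Ioi
    rw [Pi.pow_apply, hr hx, expSum, show -2 * β * x = -(β * x) + -(β * x) by ring, exp_add]
    ring

end Decay

lemma eq_or_eq_neg_of_symmetric_system {R : Type*} [CommRing R] [NoZeroDivisors R]
    {x y u v : R}
    (h₁ : x * u + y * v = 0) (h₂ : y * u + x * v = 0) (huv : u ≠ 0 ∨ v ≠ 0) :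
    x = y ∨ x = -y := by
  rw [← mul_self_eq_mul_self_iff, ← sub_eq_zero]
  have hu : (x * x - y * y) * u = 0 := by linear_combination x * h₁ - y * h₂
  have hv : (x * x - y * y) * v = 0 := by linear_combination x * h₂ - y * h₁
  rcases huv with hu' | hv'
  · exact (mul_eq_zero.1 hu).resolve_right hu'
  · exact (mul_eq_zero.1 hv).resolve_right hv'

lemma mem_Iio_or_mem_Ioo_or_mem_Ioi {a x : ℝ} (h₁ : x ≠ a) (h₂ : x ≠ -a) :
    x ∈ Iio (-a) ∨ x ∈ Ioo (-a) a ∨ x ∈ Ioi a := by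
  rcases h₂.lt_or_gt with h | h
  · exact Or.inl h
  · rcases h₁.lt_or_gt with h' | h'
    · exact Or.inr (Or.inl ⟨h, h'⟩)
    · exact Or.inr (Or.inr h')

section Matching

variable {α a β L D₁ D₂ R : ℝ} {ψ : ℝ → ℝ}

lemma secular_of_eqOn_expSum (ha : 0 < a) (hψ : Continuous ψ) (hψ0 : ψ ≠ 0)
    (hL : EqOn ψ (expSum β L 0) (Iio (-a))) (hD : EqOn ψ (expSum β D₁ D₂) (Ioo (-a) a))
    (hR : EqOn ψ (expSum β 0 R) (Ioi a))
    (hja : ∃ dp dm : ℝ, Tendsto (deriv ψ) (𝓝[>] a) (𝓝 dp) ∧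
      Tendsto (deriv ψ) (𝓝[<] a) (𝓝 dm) ∧ dp - dm = α * ψ a)
    (hjma : ∃ dp dm : ℝ, Tendsto (deriv ψ) (𝓝[>] (-a)) (𝓝 dp) ∧
      Tendsto (deriv ψ) (𝓝[<] (-a)) (𝓝 dm) ∧ dp - dm = α * ψ (-a)) :
    (2 * β + α) * exp (β * a) = α * exp (-(β * a)) ∨
      (2 * β + α) * exp (β * a) = -α * exp (-(β * a)) := by
  rw [neg_mul]
  have hDa : ψ =ᶠ[𝓝[<] a] expSum β D₁ D₂ :=
    eventuallyEq_of_mem (Ioo_mem_nhdsLT (by linarith)) hD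
  have hRa : ψ =ᶠ[𝓝[>] a] expSum β 0 R := eventuallyEq_of_mem self_mem_nhdsWithin hR
  have hLma : ψ =ᶠ[𝓝[<] (-a)] expSum β L 0 := eventuallyEq_of_mem self_mem_nhdsWithin hL
  have hDma : ψ =ᶠ[𝓝[>] (-a)] expSum β D₁ D₂ :=
    eventuallyEq_of_mem (Ioo_mem_nhdsGT (by linarith)) hD
  have hψa := eq_expSum_of_eventuallyEq hψ.continuousAt hDa
  have hψa' := eq_expSum_of_eventuallyEq hψ.continuousAt hRa
  have hψma := eq_expSum_of_eventuallyEq hψ.continuousAt hDma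
  have hψma' := eq_expSum_of_eventuallyEq hψ.continuousAt hLma
  have hja' := (exists_jump_iff hDa hRa).1 hja
  have hjma' := (exists_jump_iff hLma hDma).1 hjma
  have hPQ : exp (β * a) * exp (-(β * a)) = 1 := by rw [← exp_add, add_neg_cancel, exp_zero]
  have hQ : exp (-(β * a)) ≠ 0 := (exp_pos _).ne'
  simp only [expSum_neg] at hψma hψma' hjma'
  simp only [expSum] at hψa hψa' hψma hψma' hja' hjma'
  refine eq_or_eq_neg_of_symmetric_system (u := D₁) (v := D₂) ?_ ?_ ?_
  · linear_combination -hja' - (β + α) * hψa + β * hψa'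
  · linear_combination -hjma' - (α + β) * hψma + β * hψma'
  · by_contra! hD0
    obtain ⟨rfl, rfl⟩ := hD0
    obtain rfl : R = 0 := by simpa [hQ] using hψa'.symm.trans hψa
    obtain rfl : L = 0 := by simpa [hQ] using hψma'.symm.trans hψma
    refine hψ0 (funext fun x ↦ ?_)
    by_cases hxa : x = a
    · simp [hxa, hψa]
    by_cases hxma : x = -a
    · simp [hxma, hψma]
    rcases mem_Iio_or_mem_Ioo_or_mem_Ioi hxa hxma with hx | hx | hx <;>
      [rw [hL hx]; rw [hD hx]; rw [hR hx]] <;> simp [expSum]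

lemma IsDeltaEigen.secular (ha : 0 < a) (hβ : 0 < β) (h : IsDeltaEigen α a (-β ^ 2)) :
    (2 * β + α) * exp (β * a) = α * exp (-(β * a)) ∨
      (2 * β + α) * exp (β * a) = -α * exp (-(β * a)) := by
  obtain ⟨ψ, hψ0, hψ, hψL2, hode, hja, hjma⟩ := h
  have hsol : ∀ x, x ≠ a → x ≠ -a → DifferentiableAt ℝ ψ x ∧
      DifferentiableAt ℝ (deriv ψ) x ∧ deriv (deriv ψ) x = β ^ 2 * ψ x := fun x h₁ h₂ ↦ by
    obtain ⟨d₁, d₂, h⟩ := hode x h₁ h₂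
    exact ⟨d₁, d₂, by linear_combination -h⟩
  obtain ⟨L, L', hL⟩ := exists_eqOn_expSum isOpen_Iio isPreconnected_Iio hβ.ne'
    fun x (hx : x < -a) ↦ hsol x (by linarith) hx.ne
  obtain ⟨D₁, D₂, hD⟩ := exists_eqOn_expSum isOpen_Ioo isPreconnected_Ioo hβ.ne'
    fun x hx ↦ hsol x hx.2.ne hx.1.ne'
  obtain ⟨R', R, hR⟩ := exists_eqOn_expSum isOpen_Ioi isPreconnected_Ioi hβ.ne'
    fun x (hx : a < x) ↦ hsol x hx.ne' (by linarith)
  obtain rfl : L' = 0 := eq_zero_of_memLp_of_eqOn_Iio hβ hψL2 hL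
  obtain rfl : R' = 0 := eq_zero_of_memLp_of_eqOn_Ioi hβ hψL2 hR
  exact secular_of_eqOn_expSum ha hψ hψ0 hL hD hR hja hjma

end Matching

/-- `e^{βx} + σ e^{-βx}` on `[-a, a]`, continued continuously by decaying exponentials
outside; `σ = 1` is the even and `σ = -1` the odd bound state. -/
noncomputable def deltaBoundState (β a σ x : ℝ) : ℝ :=
  expSum β 1 σ (max (-a) (min x a)) * exp (-(β * (max |x| a - a)))

section BoundState

variable {α a β σ x : ℝ}

lemma continuous_deltaBoundState : Continuous (deltaBoundState β a σ) := by
  unfold deltaBoundState expSum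
  fun_prop

lemma deltaBoundState_of_mem_Icc (hx : x ∈ Icc (-a) a) :
    deltaBoundState β a σ x = expSum β 1 σ x := by
  rw [deltaBoundState, min_eq_left hx.2, max_eq_right hx.1, max_eq_right (abs_le.2 hx),
    sub_self, mul_zero, neg_zero, exp_zero, mul_one]

lemma deltaBoundState_of_le (ha : 0 ≤ a) (hx : a ≤ x) :
    deltaBoundState β a σ x = expSum β 0 (expSum β 1 σ a * exp (β * a)) x := by
  rw [deltaBoundState, min_eq_right hx, max_eq_right (by linarith), abs_of_nonneg (by linarith),
    max_eq_left hx]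
  simp only [expSum]
  rw [show -(β * (x - a)) = β * a + -(β * x) by ring, exp_add]
  ring

lemma deltaBoundState_of_le_neg (ha : 0 ≤ a) (hx : x ≤ -a) :
    deltaBoundState β a σ x = expSum β (expSum β 1 σ (-a) * exp (β * a)) 0 x := by
  rw [deltaBoundState, min_eq_left (by linarith), max_eq_left hx, abs_of_nonpos (by linarith),
    max_eq_left (by linarith)]
  simp only [expSum]
  rw [show -(β * (-x - a)) = β * a + β * x by ring, exp_add]
  ring

lemma isDeltaEigen_deltaBoundState (ha : 0 < a) (hβ : 0 < β) (hσ : σ = 1 ∨ σ = -1)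
    (h : (2 * β + α) * exp (β * a) = -σ * α * exp (-(β * a))) : IsDeltaEigen α a (-β ^ 2) := by
  set ψ := deltaBoundState β a σ
  have hL : EqOn ψ (expSum β (expSum β 1 σ (-a) * exp (β * a)) 0) (Iio (-a)) :=
    fun x hx ↦ deltaBoundState_of_le_neg ha.le (le_of_lt hx)
  have hD : EqOn ψ (expSum β 1 σ) (Ioo (-a) a) :=
    fun x hx ↦ deltaBoundState_of_mem_Icc (Ioo_subset_Icc_self hx)
  have hR : EqOn ψ (expSum β 0 (expSum β 1 σ a * exp (β * a))) (Ioi a) :=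
    fun x hx ↦ deltaBoundState_of_le ha.le (le_of_lt hx)
  have hψa : ψ a = expSum β 1 σ a := deltaBoundState_of_mem_Icc ⟨by linarith, le_rfl⟩
  have hψma : ψ (-a) = expSum β 1 σ (-a) := deltaBoundState_of_mem_Icc ⟨le_rfl, by linarith⟩
  have hσ2 : σ ^ 2 = 1 := by rcases hσ with rfl | rfl <;> norm_num
  have hPQ : exp (β * a) * exp (-(β * a)) = 1 := by rw [← exp_add, add_neg_cancel, exp_zero]
  refine ⟨ψ, fun h0 ↦ ?_, continuous_deltaBoundState,
    memLp_two_of_eqOn_expSum hβ continuous_deltaBoundState hL hR, fun x h₁ h₂ ↦ ?_, ?_, ?_⟩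
  · have hQP : exp (-(β * a)) < exp (β * a) := exp_lt_exp.2 (by nlinarith)
    have := congrFun h0 a
    rw [hψa, Pi.zero_apply, expSum] at this
    rcases hσ with rfl | rfl <;> linarith [exp_pos (-(β * a))]
  · obtain ⟨A, B, hψx⟩ : ∃ A B, ψ =ᶠ[𝓝 x] expSum β A B := by
      rcases mem_Iio_or_mem_Ioo_or_mem_Ioi h₁ h₂ with hx | hx | hx
      · exact ⟨_, _, eventuallyEq_of_mem (isOpen_Iio.mem_nhds hx) hL⟩
      · exact ⟨_, _, eventuallyEq_of_mem (isOpen_Ioo.mem_nhds hx) hD⟩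
      · exact ⟨_, _, eventuallyEq_of_mem (isOpen_Ioi.mem_nhds hx) hR⟩
    obtain ⟨d₁, d₂, hψ''⟩ := hψx.deriv_deriv_eq_of_expSum
    exact ⟨d₁, d₂, by rw [hψ'']; ring⟩
  · rw [exists_jump_iff (eventuallyEq_of_mem (Ioo_mem_nhdsLT (by linarith)) hD)
      (eventuallyEq_of_mem self_mem_nhdsWithin hR), hψa]
    simp only [expSum]
    linear_combination -h - β * (exp (β * a) + σ * exp (-(β * a))) * hPQ
  · rw [exists_jump_iff (eventuallyEq_of_mem self_mem_nhdsWithin hL)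
      (eventuallyEq_of_mem (Ioo_mem_nhdsGT (by linarith)) hD), hψma]
    simp only [expSum_neg]
    simp only [expSum]
    linear_combination -σ * h - β * (σ * exp (β * a) + exp (-(β * a))) * hPQ
      + α * exp (-(β * a)) * hσ2

end BoundState

section Spectrum

variable {α a β : ℝ}

theorem isDeltaEigen_neg_sq_iff (ha : 0 < a) (hβ : 0 < β) :
    IsDeltaEigen α a (-β ^ 2) ↔ (2 * β + α) * exp (β * a) = α * exp (-(β * a)) ∨
      (2 * β + α) * exp (β * a) = -α * exp (-(β * a)) := by
  refine ⟨IsDeltaEigen.secular ha hβ, ?_⟩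
  rintro (h | h)
  · exact isDeltaEigen_deltaBoundState ha hβ (Or.inr rfl) (by simpa using h)
  · exact isDeltaEigen_deltaBoundState ha hβ (Or.inl rfl) (by simpa using h)

lemma secular_iff_mul_exp (ha : a ≠ 0) {c : ℝ} :
    (2 * β + α) * exp (β * a) = c * exp (-(β * a)) ↔
      a * (2 * β + α) * exp (a * (2 * β + α)) = a * c * exp (a * α) := by
  have hK : a * exp (a * α) * exp (β * a) ≠ 0 := by positivity
  have hexp : exp (a * (2 * β + α)) = exp (β * a) * exp (β * a) * exp (a * α) := by
    rw [← exp_add, ← exp_add]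
    ring_nf
  have hPQ : exp (β * a) * exp (-(β * a)) = 1 := by rw [← exp_add, add_neg_cancel, exp_zero]
  rw [← mul_right_inj' hK]
  exact Eq.congr (by rw [hexp]; ring) (by linear_combination a * c * exp (a * α) * hPQ)

lemma neg_sq_eq_iff_mul_add_eq {w : ℝ} (ha : 0 < a) (hβ : 0 ≤ β) (hw : a * α ≤ w) :
    -β ^ 2 = -(1 / (4 * a ^ 2)) * (w - a * α) ^ 2 ↔ a * (2 * β + α) = w := by
  have h : -(1 / (4 * a ^ 2)) * (w - a * α) ^ 2 = -((w - a * α) / (2 * a)) ^ 2 := by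
    field_simp
    ring
  rw [h, neg_inj, sq_eq_sq₀ hβ (div_nonneg (by linarith) (by linarith)),
    eq_div_iff (by positivity)]
  constructor <;> intro h <;> linarith

lemma strictAntiOn_neg_mul_sub_sq (ha : a ≠ 0) :
    StrictAntiOn (fun w ↦ -(1 / (4 * a ^ 2)) * (w - a * α) ^ 2) (Ici (a * α)) :=
  fun v hv w hw hvw ↦ by
    simp only [neg_mul, neg_lt_neg_iff]
    exact mul_lt_mul_of_pos_left
      (pow_lt_pow_left₀ (by linarith [mem_Ici.1 hv]) (by linarith [mem_Ici.1 hv]) two_ne_zero)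
      (by positivity)

theorem isDeltaEigen_iff_of_mul_exp_eq (ha : 0 < a) (haα : a * α < -1) {w₁ w₂ E : ℝ}
    (hw₁ : w₁ * exp w₁ = -(a * α) * exp (a * α)) (hw₁' : -1 ≤ w₁)
    (hw₂ : w₂ * exp w₂ = a * α * exp (a * α)) (hw₂' : -1 ≤ w₂) (hE : E < 0) :
    IsDeltaEigen α a E ↔ E = -(1 / (4 * a ^ 2)) * (w₁ - a * α) ^ 2 ∨
      E = -(1 / (4 * a ^ 2)) * (w₂ - a * α) ^ 2 := by
  obtain ⟨β, hβ, rfl⟩ : ∃ β > 0, E = -β ^ 2 :=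
    ⟨√(-E), Real.sqrt_pos.2 (by linarith), by rw [Real.sq_sqrt (by linarith)]; ring⟩
  have hu : a * α < a * (2 * β + α) := by nlinarith
  have hneg : a * α * exp (a * α) ≤ -(a * α) * exp (a * α) := by
    nlinarith [exp_pos (a * α)]
  rw [isDeltaEigen_neg_sq_iff ha hβ, secular_iff_mul_exp ha.ne', secular_iff_mul_exp ha.ne',
    mul_neg, ← hw₁, ← hw₂, mul_exp_eq_mul_exp_iff hw₁' hu (hw₁ ▸ hneg),
    mul_exp_eq_mul_exp_iff hw₂' hu hw₂.ge, neg_sq_eq_iff_mul_add_eq ha hβ.le (by linarith),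
    neg_sq_eq_iff_mul_add_eq ha hβ.le (by linarith)]
  exact or_comm

end Spectrum

/-- for `α < 0`, the double-delta operator has exactly the two
negative eigenvalues `E₁ < E₂ < 0`, given by the Lambert `W` formulas, if and
only if `a > −1/α`. Here `W` is the principal Lambert branch, characterized by
`W(x) e^{W(x)} = x` and `W(x) ≥ −1` on `[−e⁻¹, ∞)`. -/
theorem stmt_16 (α a : ℝ) (hα : α < 0) (ha : 0 < a)
    (W : ℝ → ℝ)
    (hW : ∀ x : ℝ, -Real.exp (-1) ≤ x →
      W x * Real.exp (W x) = x ∧ -1 ≤ W x)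
    (E₁ E₂ : ℝ)
    (hE₁ : E₁ = -(1 / (4 * a ^ 2)) * (W (-(a * α) * Real.exp (a * α)) - a * α) ^ 2)
    (hE₂ : E₂ = -(1 / (4 * a ^ 2)) * (W ((a * α) * Real.exp (a * α)) - a * α) ^ 2) :
    (({E : ℝ | E < 0 ∧ IsDeltaEigen α a E} = {E₁, E₂} ∧ E₁ < E₂ ∧ E₂ < 0)
      ↔ -1 / α < a) := by
  rw [div_lt_iff_of_neg hα]
  obtain ⟨hw₂, hw₂'⟩ := hW _ (neg_exp_neg_one_le_mul_exp (a * α))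
  constructor
  · rintro ⟨-, -, hE₂neg⟩
    by_contra! haα
    rw [strictMonoOn_mul_exp.injOn hw₂' haα hw₂, sub_self] at hE₂
    simp [hE₂] at hE₂neg
  intro haα
  have hpos : 0 < -(a * α) * exp (a * α) := mul_pos (by linarith) (exp_pos _)
  obtain ⟨hw₁, hw₁'⟩ := hW _ ((neg_nonpos.2 (exp_pos (-1)).le).trans hpos.le)
  have hw₁₂ : W (a * α * exp (a * α)) < W (-(a * α) * exp (a * α)) :=
    (strictMonoOn_mul_exp.lt_iff_lt hw₂' hw₁').1 (by linarith)
  have hanti := strictAntiOn_neg_mul_sub_sq (α := α) ha.ne'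
  have hE₂neg : E₂ < 0 := by
    simpa [hE₂] using hanti self_mem_Ici (mem_Ici.2 (by linarith)) (by linarith)
  have hE₁₂ : E₁ < E₂ :=
    hE₁ ▸ hE₂ ▸ hanti (mem_Ici.2 (by linarith)) (mem_Ici.2 (by linarith)) hw₁₂
  have hspec : ∀ E < 0, IsDeltaEigen α a E ↔ E = E₁ ∨ E = E₂ := fun E hE ↦
    hE₁ ▸ hE₂ ▸ isDeltaEigen_iff_of_mul_exp_eq ha haα hw₁ hw₁' hw₂ hw₂' hE
  refine ⟨Set.ext fun E ↦ ⟨fun ⟨hE, h⟩ ↦ (hspec E hE).1 h, ?_⟩, hE₁₂, hE₂neg⟩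
  rintro (rfl | rfl)
  · exact ⟨hE₁₂.trans hE₂neg, (hspec _ (hE₁₂.trans hE₂neg)).2 (Or.inl rfl)⟩
  · exact ⟨hE₂neg, (hspec _ hE₂neg).2 (Or.inr rfl)⟩
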